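/- arXiv:2011.13868 — 4 statements merged into one kernel-verified Lean document; each statement's English description precedes it below -/
import Mathlib

section
/- Let the T recorded columns of (U_L, Y_L) each be a trajectory of the LTI system, with the j-th column of X_1 being the initial state of the j-th trajectory. Assume the stacked matrix [X_1; U_L] ∈ ℝ^{(n+Lm)×T} has full row rank n + Lm (so in particular U_L is persistently exciting of order L and rank(X_1) = n, which requires T ≥ Lm + n). Then for any input sequence u = (u_1,…,u_L) in ℝ^m and output sequence y = (y_1,…,y_L) in ℝ^p, the pair (u, y) is a trajectory of the system if and only if there exists g ∈ ℝ^T such that U_L g equals the stacked vector [u_1; …; u_L] and Y_L g equals the stacked vector [y_1; …; y_L]. -/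
/-!
Trajectories from a given initial state form a linear subspace, so for every `g` the data
combination `(U_L g, Y_L g)` is a trajectory from the initial state `X₁ g`. Conversely, full row
rank of `[X₁; U_L]` lets us choose `g` realising any prescribed initial state and input, and the
output of a trajectory is determined by its initial state and input.
-/

open Matrix

/-- `(u, y)` is a trajectory of the discrete-time LTI system `(A, B, C, D)` of length `L`,
started from the initial state `x₁`. -/
def IsTrajectoryFrom {n m p : ℕ} (A : Matrix (Fin n) (Fin n) ℝ) (B : Matrix (Fin n) (Fin m) ℝ)
    (C : Matrix (Fin p) (Fin n) ℝ) (D : Matrix (Fin p) (Fin m) ℝ) (L : ℕ)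
    (x₁ : Fin n → ℝ) (u : Fin L → Fin m → ℝ) (y : Fin L → Fin p → ℝ) : Prop :=
  ∃ x : Fin L → Fin n → ℝ,
    (∀ h : 0 < L, x ⟨0, h⟩ = x₁) ∧
    (∀ k : ℕ, ∀ h : k + 1 < L,
      x ⟨k + 1, h⟩ =
        A.mulVec (x ⟨k, Nat.lt_of_succ_lt h⟩) + B.mulVec (u ⟨k, Nat.lt_of_succ_lt h⟩)) ∧
    (∀ k : Fin L, y k = C.mulVec (x k) + D.mulVec (u k))

/-- `(u, y)` is a trajectory of the discrete-time LTI system `(A, B, C, D)` of length `L`. -/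
def IsTrajectory {n m p : ℕ} (A : Matrix (Fin n) (Fin n) ℝ) (B : Matrix (Fin n) (Fin m) ℝ)
    (C : Matrix (Fin p) (Fin n) ℝ) (D : Matrix (Fin p) (Fin m) ℝ) (L : ℕ)
    (u : Fin L → Fin m → ℝ) (y : Fin L → Fin p → ℝ) : Prop :=
  ∃ x₁ : Fin n → ℝ, IsTrajectoryFrom A B C D L x₁ u y

theorem Matrix.mulVec_surjective_of_rank_eq_card {K m n : Type*} [Field K] [Fintype m]
    [Fintype n] {M : Matrix m n K} (h : M.rank = Fintype.card m) :
    Function.Surjective M.mulVec := by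
  have htop : LinearMap.range M.mulVecLin = ⊤ := by
    apply Submodule.eq_top_of_finrank_eq
    rw [Module.finrank_fintype_fun_eq_card, ← h]
    rfl
  exact LinearMap.range_eq_top.mp htop

section Trajectory

variable {n m p : ℕ} {A : Matrix (Fin n) (Fin n) ℝ} {B : Matrix (Fin n) (Fin m) ℝ}
  {C : Matrix (Fin p) (Fin n) ℝ} {D : Matrix (Fin p) (Fin m) ℝ} {L : ℕ}

namespace IsTrajectoryFrom

theorem zero : IsTrajectoryFrom A B C D L 0 0 0 :=
  ⟨0, fun _ => rfl, fun _ _ => by simp, fun _ => by simp⟩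

theorem add {x₁ x₁' : Fin n → ℝ} {u u' : Fin L → Fin m → ℝ} {y y' : Fin L → Fin p → ℝ}
    (h : IsTrajectoryFrom A B C D L x₁ u y) (h' : IsTrajectoryFrom A B C D L x₁' u' y') :
    IsTrajectoryFrom A B C D L (x₁ + x₁') (u + u') (y + y') := by
  obtain ⟨x, hinit, hstep, hout⟩ := h
  obtain ⟨x', hinit', hstep', hout'⟩ := h'
  refine ⟨x + x', fun hL => by simp [hinit hL, hinit' hL], fun k hk => ?_, fun k => ?_⟩
  · simp only [Pi.add_apply, hstep k hk, hstep' k hk, mulVec_add]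
    abel
  · simp only [Pi.add_apply, hout k, hout' k, mulVec_add]
    abel

theorem smul {x₁ : Fin n → ℝ} {u : Fin L → Fin m → ℝ} {y : Fin L → Fin p → ℝ} (c : ℝ)
    (h : IsTrajectoryFrom A B C D L x₁ u y) :
    IsTrajectoryFrom A B C D L (c • x₁) (c • u) (c • y) := by
  obtain ⟨x, hinit, hstep, hout⟩ := h
  refine ⟨c • x, fun hL => by simp [hinit hL], fun k hk => ?_, fun k => ?_⟩ <;>
    simp [hstep, hout, mulVec_smul]

theorem output_unique {x₁ : Fin n → ℝ} {u : Fin L → Fin m → ℝ} {y y' : Fin L → Fin p → ℝ}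
    (h : IsTrajectoryFrom A B C D L x₁ u y) (h' : IsTrajectoryFrom A B C D L x₁ u y') :
    y = y' := by
  obtain ⟨x, hinit, hstep, hout⟩ := h
  obtain ⟨x', hinit', hstep', hout'⟩ := h'
  have hstate : ∀ k (hk : k < L), x ⟨k, hk⟩ = x' ⟨k, hk⟩ := by
    intro k
    induction k with
    | zero => intro hk; rw [hinit hk, hinit' hk]
    | succ k ih => intro hk; rw [hstep k hk, hstep' k hk, ih]
  funext k
  rw [hout k, hout' k, hstate k k.2]

end IsTrajectoryFrom

variable (A B C D L) in
def trajectorySubmodule :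
    Submodule ℝ ((Fin n → ℝ) × (Fin L → Fin m → ℝ) × (Fin L → Fin p → ℝ)) where
  carrier := {w | IsTrajectoryFrom A B C D L w.1 w.2.1 w.2.2}
  zero_mem' := IsTrajectoryFrom.zero
  add_mem' := IsTrajectoryFrom.add
  smul_mem' c _ := IsTrajectoryFrom.smul c

theorem mk_mem_trajectorySubmodule {x₁ : Fin n → ℝ} {u : Fin L → Fin m → ℝ}
    {y : Fin L → Fin p → ℝ} :
    (x₁, u, y) ∈ trajectorySubmodule A B C D L ↔ IsTrajectoryFrom A B C D L x₁ u y :=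
  Iff.rfl

theorem isTrajectoryFrom_mulVec {T : ℕ} {UL : Matrix (Fin L × Fin m) (Fin T) ℝ}
    {YL : Matrix (Fin L × Fin p) (Fin T) ℝ} {X1 : Matrix (Fin n) (Fin T) ℝ}
    (hdata : ∀ j : Fin T, IsTrajectoryFrom A B C D L (fun i => X1 i j)
      (fun k i => UL (k, i) j) (fun k i => YL (k, i) j)) (g : Fin T → ℝ) :
    IsTrajectoryFrom A B C D L (X1 *ᵥ g) (Function.curry (UL *ᵥ g))
      (Function.curry (YL *ᵥ g)) := by
  have hcomb : (X1 *ᵥ g, Function.curry (UL *ᵥ g), Function.curry (YL *ᵥ g)) =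
      ∑ j, g j • ((fun i => X1 i j), (fun k i => UL (k, i) j), (fun k i => YL (k, i) j)) := by
    ext <;> simp [Prod.fst_sum, Prod.snd_sum, Finset.sum_apply, mulVec, dotProduct, mul_comm]
  rw [← mk_mem_trajectorySubmodule, hcomb]
  exact Submodule.sum_mem _ fun j _ =>
    Submodule.smul_mem _ (g j) (mk_mem_trajectorySubmodule.mpr (hdata j))

end Trajectory

theorem fundamental_lemma_general {n m p T : ℕ} {L : ℕ}
    (A : Matrix (Fin n) (Fin n) ℝ) (B : Matrix (Fin n) (Fin m) ℝ)
    (C : Matrix (Fin p) (Fin n) ℝ) (D : Matrix (Fin p) (Fin m) ℝ)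
    (UL : Matrix (Fin L × Fin m) (Fin T) ℝ) (YL : Matrix (Fin L × Fin p) (Fin T) ℝ)
    (X1 : Matrix (Fin n) (Fin T) ℝ)
    (hdata : ∀ j : Fin T, IsTrajectoryFrom A B C D L (fun i => X1 i j)
      (fun k i => UL (k, i) j) (fun k i => YL (k, i) j))
    (hrank : (Matrix.fromRows X1 UL).rank = n + L * m)
    (u : Fin L → Fin m → ℝ) (y : Fin L → Fin p → ℝ) :
    IsTrajectory A B C D L u y ↔
      ∃ g : Fin T → ℝ,
        UL.mulVec g = (fun ki => u ki.1 ki.2) ∧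
        YL.mulVec g = (fun ki => y ki.1 ki.2) := by
  constructor
  · rintro ⟨x₁, htraj⟩
    have hsurj : Function.Surjective (Matrix.fromRows X1 UL).mulVec :=
      Matrix.mulVec_surjective_of_rank_eq_card (by simp [hrank])
    obtain ⟨g, hg⟩ := hsurj (Sum.elim x₁ (Function.uncurry u))
    rw [fromRows_mulVec, Sum.elim_eq_iff] at hg
    obtain ⟨hX, hU⟩ := hg
    have hcomb := isTrajectoryFrom_mulVec hdata g
    rw [hX, hU, Function.curry_uncurry] at hcomb
    exact ⟨g, hU, by rw [htraj.output_unique hcomb]; rfl⟩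
  · rintro ⟨g, hU, hY⟩
    have hcomb := isTrajectoryFrom_mulVec hdata g
    rw [hU, hY] at hcomb
    exact ⟨_, hcomb⟩

/-- **Fundamental lemma.** If the `T` recorded columns of `(U_L, Y_L)` are trajectories of the
system with initial states the columns of `X₁`, and the stacked matrix `[X₁; U_L]` has full row
rank `n + L·m`, then `(u, y)` is a trajectory of the system iff there is `g` with
`U_L g = u` and `Y_L g = y` (stacked). -/
theorem fundamental_lemma {n m p T_ini N T : ℕ} {L : ℕ} (hL : L = T_ini + N)
    (A : Matrix (Fin n) (Fin n) ℝ) (B : Matrix (Fin n) (Fin m) ℝ)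
    (C : Matrix (Fin p) (Fin n) ℝ) (D : Matrix (Fin p) (Fin m) ℝ)
    (UL : Matrix (Fin L × Fin m) (Fin T) ℝ) (YL : Matrix (Fin L × Fin p) (Fin T) ℝ)
    (X1 : Matrix (Fin n) (Fin T) ℝ)
    (hdata : ∀ j : Fin T, IsTrajectoryFrom A B C D L (fun i => X1 i j)
      (fun k i => UL (k, i) j) (fun k i => YL (k, i) j))
    (hrank : (Matrix.fromRows X1 UL).rank = n + L * m)
    (u : Fin L → Fin m → ℝ) (y : Fin L → Fin p → ℝ) :
    IsTrajectory A B C D L u y ↔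
      ∃ g : Fin T → ℝ,
        UL.mulVec g = (fun ki => u ki.1 ki.2) ∧
        YL.mulVec g = (fun ki => y ki.1 ki.2) :=
  fundamental_lemma_general A B C D UL YL X1 hdata hrank u y
end

section
/- Under the assumptions that the columns of (U_L, Y_L) are trajectories of the LTI system with initial states the columns of X_1, that [X_1; U_L] has full row rank n + Lm, that O_{T_ini}(A,C) has full column rank n, that M† is a Moore–Penrose pseudoinverse of M = [Y_ini; U_ini; U_N] with P* = Y_N M†, and that (u_ini, y_ini) are the first T_ini inputs and outputs of some trajectory of the system: for any cost function f(u_N, y_N) = Σ_{k=1}^N (y_kᵀ Q y_k + u_kᵀ R u_k) with Q ∈ ℝ^{p×p}, R ∈ ℝ^{m×m}, and any constraint sets 𝕌 ⊆ ℝ^m, 𝕐 ⊆ ℝ^p, a pair (u_N*, y_N*) with u_k* ∈ 𝕌 and y_k* ∈ 𝕐 for all k is an optimal solution of the DeePC problem (minimize f over all (g, u_N, y_N) with [Y_ini; U_ini; U_N; Y_N] g = [y_ini; u_ini; u_N; y_N] and u_k ∈ 𝕌, y_k ∈ 𝕐) if and only if it is an optimal solution of the SPC problem (minimize f over all (u_N,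 y_N) with y_N = P* [y_ini; u_ini; u_N] and u_k ∈ 𝕌, y_k ∈ 𝕐). -/
open Matrix

/-- The observability matrix `O_l(A, C) = [C; CA; …; CA^{l-1}]`. -/
def obsMat {n p : ℕ} (A : Matrix (Fin n) (Fin n) ℝ) (C : Matrix (Fin p) (Fin n) ℝ) (l : ℕ) :
    Matrix (Fin l × Fin p) (Fin n) ℝ :=
  fun ki j => (C * A ^ (ki.1 : ℕ)) ki.2 j

/-- `Mp` is a Moore–Penrose pseudoinverse of `M`. -/
def IsMoorePenrose {q T : Type*} [Fintype q] [Fintype T]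
    (M : Matrix q T ℝ) (Mp : Matrix T q ℝ) : Prop :=
  M * Mp * M = M ∧ Mp * M * Mp = Mp ∧ (M * Mp)ᵀ = M * Mp ∧ (Mp * M)ᵀ = Mp * M

/-- The regulation cost `f(u_N, y_N) = Σ_{k=1}^N (y_kᵀ Q y_k + u_kᵀ R u_k)`. -/
def regCost {m p N : ℕ} (Q : Matrix (Fin p) (Fin p) ℝ) (R : Matrix (Fin m) (Fin m) ℝ)
    (uN : Fin N → Fin m → ℝ) (yN : Fin N → Fin p → ℝ) : ℝ :=
  ∑ k : Fin N, (yN k ⬝ᵥ Q.mulVec (yN k) + uN k ⬝ᵥ R.mulVec (uN k))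

section Aux


lemma mulVec_surjective_of_rank' {q t : Type*} [Fintype q] [Fintype t] [DecidableEq t]
    (M : Matrix q t ℝ) (h : M.rank = Fintype.card q) : Function.Surjective M.mulVec := by
  have hr : LinearMap.range M.mulVecLin = ⊤ := by
    apply Submodule.eq_top_of_finrank_eq
    rw [Module.finrank_fintype_fun_eq_card]
    exact h
  intro v
  obtain ⟨g, hg⟩ := LinearMap.range_eq_top.mp hr v
  exact ⟨g, hg⟩

lemma mulVec_injective_of_rank' {q t : Type*} [Fintype q] [Fintype t] [DecidableEq t]
    (M : Matrix q t ℝ) (h : M.rank = Fintype.card t) : Function.Injective M.mulVec := by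
  have h2 := LinearMap.finrank_range_add_finrank_ker M.mulVecLin
  rw [Module.finrank_fintype_fun_eq_card] at h2
  have hrk : Module.finrank ℝ ↥(LinearMap.range M.mulVecLin) = Fintype.card t := h
  rw [hrk] at h2
  have hker : LinearMap.ker M.mulVecLin = ⊥ :=
    Submodule.finrank_eq_zero.mp (by omega)
  have := LinearMap.ker_eq_bot.mp hker
  rwa [Matrix.coe_mulVecLin] at this

variable {n m p : ℕ} {A : Matrix (Fin n) (Fin n) ℝ} {B : Matrix (Fin n) (Fin m) ℝ}
  {C : Matrix (Fin p) (Fin n) ℝ} {D : Matrix (Fin p) (Fin m) ℝ}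

lemma traj_state_unique {L : ℕ} {x₁ : Fin n → ℝ} {u : Fin L → Fin m → ℝ}
    {y y' : Fin L → Fin p → ℝ} (h : IsTrajectoryFrom A B C D L x₁ u y)
    (h' : IsTrajectoryFrom A B C D L x₁ u y') : y = y' := by
  obtain ⟨x, hx0, hxr, hxy⟩ := h
  obtain ⟨x', hx0', hxr', hxy'⟩ := h'
  have hx : ∀ k : ℕ, ∀ hk : k < L, x ⟨k, hk⟩ = x' ⟨k, hk⟩ := by
    intro k
    induction k with
    | zero => intro hk; rw [hx0 hk, hx0' hk]
    | succ k ih => intro hk; rw [hxr k hk, hxr' k hk, ih (Nat.lt_of_succ_lt hk)]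
  funext k
  rw [hxy k, hxy' k]
  have := hx k.1 k.2
  simp only [Fin.eta] at this
  rw [this]

lemma traj_prefix {a b : ℕ} {x₁ : Fin n → ℝ} {u : Fin (a + b) → Fin m → ℝ}
    {y : Fin (a + b) → Fin p → ℝ} (h : IsTrajectoryFrom A B C D (a + b) x₁ u y) :
    IsTrajectoryFrom A B C D a x₁ (fun k => u (Fin.castAdd b k)) (fun k => y (Fin.castAdd b k)) := by
  obtain ⟨x, hx0, hxr, hxy⟩ := h
  refine ⟨fun k => x (Fin.castAdd b k), fun h0 => hx0 (by omega), fun k hk => ?_, fun k => hxy _⟩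
  exact hxr k (by omega)

lemma traj_output_eq {T_ini N : ℕ} (hobs : Function.Injective (obsMat A C T_ini).mulVec)
    {x₁ x₁' : Fin n → ℝ} {u : Fin (T_ini + N) → Fin m → ℝ}
    {y y' : Fin (T_ini + N) → Fin p → ℝ}
    (h : IsTrajectoryFrom A B C D (T_ini + N) x₁ u y)
    (h' : IsTrajectoryFrom A B C D (T_ini + N) x₁' u y')
    (hpre : ∀ k : Fin T_ini, y (Fin.castAdd N k) = y' (Fin.castAdd N k)) : y = y' := by
  obtain ⟨x, hx0, hxr, hxy⟩ := h
  obtain ⟨x', hx0', hxr', hxy'⟩ := h'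
  rcases Nat.eq_zero_or_pos (T_ini + N) with hL | hL
  · funext k; exact absurd k.2 (by omega)
  have hst : ∀ k : ℕ, ∀ hk : k < T_ini + N,
      x ⟨k, hk⟩ - x' ⟨k, hk⟩ = (A ^ k).mulVec (x₁ - x₁') := by
    intro k
    induction k with
    | zero => intro hk; rw [hx0 hk, hx0' hk, pow_zero, one_mulVec]
    | succ k ih =>
      intro hk
      rw [hxr k hk, hxr' k hk, add_sub_add_right_eq_sub, ← mulVec_sub,
        ih (Nat.lt_of_succ_lt hk), mulVec_mulVec, ← pow_succ']
  have h0 : (obsMat A C T_ini).mulVec (x₁ - x₁') = 0 := by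
    funext ki
    obtain ⟨k, i⟩ := ki
    have hk : (k : ℕ) < T_ini + N := by omega
    have hy := congrFun (hpre k) i
    rw [hxy, hxy'] at hy
    have hx : x (Fin.castAdd N k) = x ⟨(k : ℕ), hk⟩ := rfl
    have hx' : x' (Fin.castAdd N k) = x' ⟨(k : ℕ), hk⟩ := rfl
    rw [hx, hx'] at hy
    have hsub : C.mulVec (x ⟨(k : ℕ), hk⟩ - x' ⟨(k : ℕ), hk⟩) i = 0 := by
      rw [mulVec_sub]
      simp only [Pi.add_apply, Pi.sub_apply] at hy ⊢
      linarith
    rw [hst k.1 hk, mulVec_mulVec] at hsub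
    simpa [obsMat, mulVec, dotProduct] using hsub
  have hδ : x₁ - x₁' = 0 := hobs (by rw [h0, mulVec_zero])
  funext k
  rw [hxy k, hxy' k]
  have := hst k.1 k.2
  rw [hδ, mulVec_zero, sub_eq_zero] at this
  simp only [Fin.eta] at this
  rw [this]

lemma mulVec_sum_comm' {ι κ : Type*} [Fintype κ] {T : ℕ} (A : Matrix ι κ ℝ)
    (v : Fin T → κ → ℝ) (g : Fin T → ℝ) (i : ι) :
    A.mulVec (fun l => ∑ j, v j l * g j) i = ∑ j, A.mulVec (v j) i * g j := by
  simp only [mulVec, dotProduct, Finset.mul_sum]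
  rw [Finset.sum_comm]
  refine Finset.sum_congr rfl fun j _ => ?_
  rw [Finset.sum_mul]
  exact Finset.sum_congr rfl fun l _ => (mul_assoc _ _ _).symm

lemma append_mulVec_eq' {α : Type*} {a b T : ℕ}
    (P : Matrix (Fin a × α) (Fin T) ℝ) (Q : Matrix (Fin b × α) (Fin T) ℝ) (g : Fin T → ℝ)
    (k : Fin (a + b)) (i : α) :
    Fin.append (fun k i => P.mulVec g (k, i)) (fun k i => Q.mulVec g (k, i)) k i
      = ∑ j, Fin.append (fun k i => P (k, i) j) (fun k i => Q (k, i) j) k i * g j := by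
  induction k using Fin.addCases with
  | left k => simp [Fin.append_left, mulVec, dotProduct]
  | right k => simp [Fin.append_right, mulVec, dotProduct]

lemma traj_lincomb {T_ini N T : ℕ}
    (Uini : Matrix (Fin T_ini × Fin m) (Fin T) ℝ) (UN : Matrix (Fin N × Fin m) (Fin T) ℝ)
    (Yini : Matrix (Fin T_ini × Fin p) (Fin T) ℝ) (YN : Matrix (Fin N × Fin p) (Fin T) ℝ)
    (X1 : Matrix (Fin n) (Fin T) ℝ)
    (hdata : ∀ j : Fin T, IsTrajectoryFrom A B C D (T_ini + N) (fun i => X1 i j)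
      (Fin.append (fun k i => Uini (k, i) j) (fun k i => UN (k, i) j))
      (Fin.append (fun k i => Yini (k, i) j) (fun k i => YN (k, i) j)))
    (g : Fin T → ℝ) :
    IsTrajectoryFrom A B C D (T_ini + N) (X1.mulVec g)
      (Fin.append (fun k i => Uini.mulVec g (k, i)) (fun k i => UN.mulVec g (k, i)))
      (Fin.append (fun k i => Yini.mulVec g (k, i)) (fun k i => YN.mulVec g (k, i))) := by
  choose xs hx0 hxr hxy using hdata
  refine ⟨fun k i => ∑ j, xs j k i * g j, ?_, ?_, ?_⟩
  · intro h0
    funext i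
    simp only [mulVec, dotProduct]
    exact Finset.sum_congr rfl fun j _ => by rw [hx0 j h0]
  · intro k hk
    funext i
    have hrw : ∀ j : Fin T, xs j ⟨k + 1, hk⟩ i =
        A.mulVec (xs j ⟨k, Nat.lt_of_succ_lt hk⟩) i
        + B.mulVec (Fin.append (fun k i => Uini (k, i) j) (fun k i => UN (k, i) j)
            ⟨k, Nat.lt_of_succ_lt hk⟩) i := fun j => by rw [hxr j k hk]; rfl
    simp only [Pi.add_apply]
    calc ∑ j, xs j ⟨k + 1, hk⟩ i * g j
        = ∑ j, (A.mulVec (xs j ⟨k, Nat.lt_of_succ_lt hk⟩) i * g j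
            + B.mulVec (Fin.append (fun k i => Uini (k, i) j) (fun k i => UN (k, i) j)
              ⟨k, Nat.lt_of_succ_lt hk⟩) i * g j) := by
          refine Finset.sum_congr rfl fun j _ => ?_
          rw [hrw j, add_mul]
      _ = _ := by
          rw [Finset.sum_add_distrib]
          congr 1
          · rw [mulVec_sum_comm']
          · rw [show Fin.append (fun k i => Uini.mulVec g (k, i))
                (fun k i => UN.mulVec g (k, i)) ⟨k, Nat.lt_of_succ_lt hk⟩ =
                (fun l => ∑ j, Fin.append (fun k i => Uini (k, i) j)
                  (fun k i => UN (k, i) j) ⟨k, Nat.lt_of_succ_lt hk⟩ l * g j)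
                from funext fun l => append_mulVec_eq' _ _ _ _ _]
            rw [mulVec_sum_comm']
  · intro k
    funext i
    rw [append_mulVec_eq']
    simp only [Pi.add_apply]
    calc ∑ j, Fin.append (fun k i => Yini (k, i) j) (fun k i => YN (k, i) j) k i * g j
        = ∑ j, (C.mulVec (xs j k) i * g j
            + D.mulVec (Fin.append (fun k i => Uini (k, i) j) (fun k i => UN (k, i) j) k) i
              * g j) := by
          refine Finset.sum_congr rfl fun j _ => ?_
          rw [show Fin.append (fun k i => Yini (k, i) j) (fun k i => YN (k, i) j) k i =
            (C.mulVec (xs j k) + D.mulVec (Fin.append (fun k i => Uini (k, i) j)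
              (fun k i => UN (k, i) j) k)) i from by rw [hxy j k], Pi.add_apply, add_mul]
      _ = _ := by
          rw [Finset.sum_add_distrib]
          congr 1
          · rw [mulVec_sum_comm']
          · rw [show Fin.append (fun k i => Uini.mulVec g (k, i))
                (fun k i => UN.mulVec g (k, i)) k =
                (fun l => ∑ j, Fin.append (fun k i => Uini (k, i) j)
                  (fun k i => UN (k, i) j) k l * g j)
                from funext fun l => append_mulVec_eq' _ _ _ _ _]
            rw [mulVec_sum_comm']

end Aux

/-- **Theorem 1 (equivalence of DeePC and SPC).** Under the data assumptions, a feasible pair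
`(u_N*, y_N*)` is an optimal solution of the DeePC problem iff it is an optimal solution of the
SPC problem, for any cost `f(u_N, y_N) = Σ_k (y_kᵀ Q y_k + u_kᵀ R u_k)` and any constraint sets
`𝕌 ⊆ ℝ^m`, `𝕐 ⊆ ℝ^p`. -/
theorem deepc_spc_optimality_equivalence {n m p T_ini N T : ℕ}
    (A : Matrix (Fin n) (Fin n) ℝ) (B : Matrix (Fin n) (Fin m) ℝ)
    (C : Matrix (Fin p) (Fin n) ℝ) (D : Matrix (Fin p) (Fin m) ℝ)
    (Uini : Matrix (Fin T_ini × Fin m) (Fin T) ℝ) (UN : Matrix (Fin N × Fin m) (Fin T) ℝ)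
    (Yini : Matrix (Fin T_ini × Fin p) (Fin T) ℝ) (YN : Matrix (Fin N × Fin p) (Fin T) ℝ)
    (X1 : Matrix (Fin n) (Fin T) ℝ)
    (hdata : ∀ j : Fin T, IsTrajectoryFrom A B C D (T_ini + N) (fun i => X1 i j)
      (Fin.append (fun k i => Uini (k, i) j) (fun k i => UN (k, i) j))
      (Fin.append (fun k i => Yini (k, i) j) (fun k i => YN (k, i) j)))
    (hrank : (Matrix.fromRows X1 (Matrix.fromRows Uini UN)).rank = n + (T_ini + N) * m)
    (hobs : (obsMat A C T_ini).rank = n)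
    (M : Matrix ((Fin T_ini × Fin p) ⊕ (Fin T_ini × Fin m) ⊕ (Fin N × Fin m)) (Fin T) ℝ)
    (hM : M = Matrix.fromRows Yini (Matrix.fromRows Uini UN))
    (Mp : Matrix (Fin T) ((Fin T_ini × Fin p) ⊕ (Fin T_ini × Fin m) ⊕ (Fin N × Fin m)) ℝ)
    (hMp : IsMoorePenrose M Mp)
    (uini : Fin T_ini → Fin m → ℝ) (yini : Fin T_ini → Fin p → ℝ)
    (hini : IsTrajectory A B C D T_ini uini yini)
    (Q : Matrix (Fin p) (Fin p) ℝ) (R : Matrix (Fin m) (Fin m) ℝ)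
    (𝕌 : Set (Fin m → ℝ)) (𝕐 : Set (Fin p → ℝ))
    (uNs : Fin N → Fin m → ℝ) (yNs : Fin N → Fin p → ℝ)
    (huNs : ∀ k, uNs k ∈ 𝕌) (hyNs : ∀ k, yNs k ∈ 𝕐) :
    -- optimal for DeePC
    ((∃ g : Fin T → ℝ,
        Yini.mulVec g = (fun ki => yini ki.1 ki.2) ∧
        Uini.mulVec g = (fun ki => uini ki.1 ki.2) ∧
        UN.mulVec g = (fun ki => uNs ki.1 ki.2) ∧
        YN.mulVec g = (fun ki => yNs ki.1 ki.2)) ∧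
      (∀ (uN : Fin N → Fin m → ℝ) (yN : Fin N → Fin p → ℝ),
        (∀ k, uN k ∈ 𝕌) → (∀ k, yN k ∈ 𝕐) →
        (∃ g : Fin T → ℝ,
          Yini.mulVec g = (fun ki => yini ki.1 ki.2) ∧
          Uini.mulVec g = (fun ki => uini ki.1 ki.2) ∧
          UN.mulVec g = (fun ki => uN ki.1 ki.2) ∧
          YN.mulVec g = (fun ki => yN ki.1 ki.2)) →
        regCost Q R uNs yNs ≤ regCost Q R uN yN)) ↔
    -- optimal for SPC
    (((fun ki : Fin N × Fin p => yNs ki.1 ki.2) =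
        (YN * Mp).mulVec (Sum.elim (fun ki : Fin T_ini × Fin p => yini ki.1 ki.2)
          (Sum.elim (fun ki : Fin T_ini × Fin m => uini ki.1 ki.2)
            (fun ki : Fin N × Fin m => uNs ki.1 ki.2)))) ∧
      (∀ (uN : Fin N → Fin m → ℝ) (yN : Fin N → Fin p → ℝ),
        (∀ k, uN k ∈ 𝕌) → (∀ k, yN k ∈ 𝕐) →
        ((fun ki : Fin N × Fin p => yN ki.1 ki.2) =
          (YN * Mp).mulVec (Sum.elim (fun ki : Fin T_ini × Fin p => yini ki.1 ki.2)
            (Sum.elim (fun ki : Fin T_ini × Fin m => uini ki.1 ki.2)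
              (fun ki : Fin N × Fin m => uN ki.1 ki.2)))) →
        regCost Q R uNs yNs ≤ regCost Q R uN yN)) := by
  classical
  have hsur : Function.Surjective (Matrix.fromRows X1 (Matrix.fromRows Uini UN)).mulVec := by
    apply mulVec_surjective_of_rank'
    rw [hrank]
    simp [Fintype.card_sum, Fintype.card_prod, Fintype.card_fin, Nat.add_mul]
  have hobsInj : Function.Injective (obsMat A C T_ini).mulVec := by
    apply mulVec_injective_of_rank'
    simpa using hobs
  have key : ∀ g : Fin T → ℝ, YN.mulVec (Mp.mulVec (M.mulVec g)) = YN.mulVec g := by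
    intro g
    set g' := Mp.mulVec (M.mulVec g) with hg'
    have hMg : M.mulVec g' = M.mulVec g := by
      rw [hg', mulVec_mulVec, mulVec_mulVec, hMp.1]
    have h1 : Yini.mulVec g' = Yini.mulVec g := by
      funext ki
      have := congrFun hMg (Sum.inl ki)
      simpa [hM, fromRows_mulVec] using this
    have h2 : Uini.mulVec g' = Uini.mulVec g := by
      funext ki
      have := congrFun hMg (Sum.inr (Sum.inl ki))
      simpa [hM, fromRows_mulVec] using this
    have h3 : UN.mulVec g' = UN.mulVec g := by
      funext ki
      have := congrFun hMg (Sum.inr (Sum.inr ki))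
      simpa [hM, fromRows_mulVec] using this
    have t1 := traj_lincomb Uini UN Yini YN X1 hdata g
    have t2 := traj_lincomb Uini UN Yini YN X1 hdata g'
    simp only [h2, h3] at t2
    have hout := traj_output_eq hobsInj t2 t1 (fun k => by
      simp only [Fin.append_left]
      funext i
      exact congrFun h1 (k, i))
    funext ki
    obtain ⟨k, i⟩ := ki
    have := congrFun (congrFun hout (Fin.natAdd T_ini k)) i
    simpa [Fin.append_right] using this
  have feas : ∀ (uN : Fin N → Fin m → ℝ) (yN : Fin N → Fin p → ℝ),
      (∃ g : Fin T → ℝ,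
        Yini.mulVec g = (fun ki => yini ki.1 ki.2) ∧
        Uini.mulVec g = (fun ki => uini ki.1 ki.2) ∧
        UN.mulVec g = (fun ki => uN ki.1 ki.2) ∧
        YN.mulVec g = (fun ki => yN ki.1 ki.2)) ↔
      ((fun ki : Fin N × Fin p => yN ki.1 ki.2) =
        (YN * Mp).mulVec (Sum.elim (fun ki : Fin T_ini × Fin p => yini ki.1 ki.2)
          (Sum.elim (fun ki : Fin T_ini × Fin m => uini ki.1 ki.2)
            (fun ki : Fin N × Fin m => uN ki.1 ki.2)))) := by
    intro uN yN
    constructor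
    · rintro ⟨g, h1, h2, h3, h4⟩
      have hb : M.mulVec g = Sum.elim (fun ki => yini ki.1 ki.2)
          (Sum.elim (fun ki => uini ki.1 ki.2) (fun ki => uN ki.1 ki.2)) := by
        rw [hM, fromRows_mulVec, fromRows_mulVec, h1, h2, h3]
      rw [← h4, ← hb, ← mulVec_mulVec]
      exact (key g).symm
    · intro hy
      obtain ⟨xh, htra⟩ := hini
      obtain ⟨g, hg⟩ := hsur (Sum.elim xh (Sum.elim (fun ki => uini ki.1 ki.2)
        (fun ki => uN ki.1 ki.2)))
      rw [fromRows_mulVec, fromRows_mulVec] at hg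
      have hX : X1.mulVec g = xh := by
        funext i; exact congrFun hg (Sum.inl i)
      have hU1 : Uini.mulVec g = (fun ki => uini ki.1 ki.2) := by
        funext ki; exact congrFun hg (Sum.inr (Sum.inl ki))
      have hU2 : UN.mulVec g = (fun ki => uN ki.1 ki.2) := by
        funext ki; exact congrFun hg (Sum.inr (Sum.inr ki))
      have t1 := traj_lincomb Uini UN Yini YN X1 hdata g
      rw [hX] at t1
      simp only [hU1, hU2] at t1
      have tpre := traj_prefix t1
      simp only [Fin.append_left] at tpre
      have hY1 : Yini.mulVec g = (fun ki => yini ki.1 ki.2) := by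
        have hyy := traj_state_unique tpre htra
        funext ki
        obtain ⟨k, i⟩ := ki
        have h' := congrFun (congrFun hyy k) i
        simpa [Fin.append_left] using h'
      refine ⟨g, hY1, hU1, hU2, ?_⟩
      have hb : M.mulVec g = Sum.elim (fun ki => yini ki.1 ki.2)
          (Sum.elim (fun ki => uini ki.1 ki.2) (fun ki => uN ki.1 ki.2)) := by
        rw [hM, fromRows_mulVec, fromRows_mulVec, hY1, hU1, hU2]
      rw [hy, ← hb, ← mulVec_mulVec]
      exact (key g).symm
  constructor
  · rintro ⟨hfeas, hopt⟩
    exact ⟨(feas uNs yNs).mp hfeas,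
      fun uN yN hu hy hf => hopt uN yN hu hy ((feas uN yN).mpr hf)⟩
  · rintro ⟨hfeas, hopt⟩
    exact ⟨(feas uNs yNs).mpr hfeas,
      fun uN yN hu hy hf => hopt uN yN hu hy ((feas uN yN).mp hf)⟩
end

section
/- Let M ∈ ℝ^{q×q} be invertible, let Y ∈ ℝ^{s×q}, let Q ∈ ℝ^{s×s} and V ∈ ℝ^{q×q} be symmetric positive definite, let b ∈ ℝ^q, and set P = Y M⁻¹. Then the matrices V + Pᵀ Q P and Mᵀ V M + Yᵀ Q Y are invertible and the following identity holds: −(V + Pᵀ Q P)⁻¹ Pᵀ Q P b = M (Mᵀ V M + Yᵀ Q Y)⁻¹ Mᵀ V b − b. (That is, the explicit SPC solution coincides with the explicit DeePC solution with regularization weight λ_g = 0.) -/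
/-!
With `A = V + PᵀQP`, which is positive definite, the substitution `Y = P M` turns the DeePC Hessian
into the congruence `Mᵀ A M`, so `M (MᵀVM + YᵀQY)⁻¹ Mᵀ = A⁻¹`. Both sides then equal
`A⁻¹ V b - b = -A⁻¹ (PᵀQP) b`, since `A⁻¹ (V + PᵀQP) b = b`.
-/

open Matrix

namespace Matrix

theorem PosDef.add_transpose_mul_mul {m n : Type*} [Fintype m] [Finite n]
    {V : Matrix n n ℝ} {Q : Matrix m m ℝ} (hV : V.PosDef) (hQ : Q.PosSemidef)
    (P : Matrix m n ℝ) : (V + Pᵀ * Q * P).PosDef :=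
  hV.add_posSemidef (by simpa using hQ.conjTranspose_mul_mul_same P)

theorem transpose_mul_mul_add_eq_of_mul_eq {m n k R : Type*} [Fintype m] [Fintype n]
    [CommSemiring R] {M : Matrix n k R} {V : Matrix n n R} {P : Matrix m n R}
    {Y : Matrix m k R} (Q : Matrix m m R) (hPM : P * M = Y) :
    Mᵀ * V * M + Yᵀ * Q * Y = Mᵀ * (V + Pᵀ * Q * P) * M := by
  subst hPM
  simp only [transpose_mul, Matrix.mul_add, Matrix.add_mul, Matrix.mul_assoc]

theorem mul_inv_mul_mul_mul_cancel {n R : Type*} [Fintype n] [DecidableEq n] [CommRing R]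
    {M N : Matrix n n R} (A : Matrix n n R) (hN : IsUnit N.det) (hM : IsUnit M.det) :
    M * (N * A * M)⁻¹ * N = A⁻¹ := by
  rw [mul_inv_rev, mul_inv_rev, ← Matrix.mul_assoc, ← Matrix.mul_assoc,
    mul_nonsing_inv M hM, Matrix.one_mul, Matrix.mul_assoc, nonsing_inv_mul N hN, Matrix.mul_one]

theorem neg_inv_add_mulVec_mulVec {n R : Type*} [Fintype n] [DecidableEq n] [CommRing R]
    {V W : Matrix n n R} (h : IsUnit (V + W).det) (b : n → R) :
    -((V + W)⁻¹ *ᵥ (W *ᵥ b)) = (V + W)⁻¹ *ᵥ (V *ᵥ b) - b := by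
  have hsum : (V + W)⁻¹ *ᵥ (V *ᵥ b) + (V + W)⁻¹ *ᵥ (W *ᵥ b) = b := by
    rw [← mulVec_add, ← add_mulVec, mulVec_mulVec, nonsing_inv_mul _ h, one_mulVec]
  rw [eq_sub_of_add_eq hsum]
  abel

end Matrix

/-- **Theorem 2 (matrix identity behind the non-deterministic equivalence).** For invertible
`M`, `P = Y M⁻¹`, and symmetric positive definite `Q`, `V`, the matrices `V + PᵀQP` and
`MᵀVM + YᵀQY` are invertible and
`−(V + PᵀQP)⁻¹ PᵀQP b = M (MᵀVM + YᵀQY)⁻¹ MᵀV b − b`. -/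
theorem spc_deepc_explicit_solutions_coincide {q s : ℕ}
    (M : Matrix (Fin q) (Fin q) ℝ) (hM : IsUnit M.det)
    (Y : Matrix (Fin s) (Fin q) ℝ)
    (Q : Matrix (Fin s) (Fin s) ℝ) (V : Matrix (Fin q) (Fin q) ℝ)
    (hQ : Q.PosDef) (hV : V.PosDef) (b : Fin q → ℝ)
    (P : Matrix (Fin s) (Fin q) ℝ) (hP : P = Y * M⁻¹) :
    IsUnit (V + Pᵀ * Q * P).det ∧
    IsUnit (Mᵀ * V * M + Yᵀ * Q * Y).det ∧
    -(V + Pᵀ * Q * P)⁻¹.mulVec ((Pᵀ * Q * P).mulVec b) =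
      M.mulVec ((Mᵀ * V * M + Yᵀ * Q * Y)⁻¹.mulVec (Mᵀ.mulVec (V.mulVec b))) - b := by
  have hPM : P * M = Y := by rw [hP, Matrix.mul_assoc, nonsing_inv_mul M hM, Matrix.mul_one]
  have hA : IsUnit (V + Pᵀ * Q * P).det :=
    (hV.add_transpose_mul_mul hQ.posSemidef P).det_pos.ne'.isUnit
  have hMT : IsUnit Mᵀ.det := isUnit_det_transpose M hM
  rw [transpose_mul_mul_add_eq_of_mul_eq Q hPM]
  refine ⟨hA, by simpa only [det_mul] using (hMT.mul hA).mul hM, ?_⟩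
  rw [neg_inv_add_mulVec_mulVec hA, ← mul_inv_mul_mul_mul_cancel _ hMT hM]
  simp only [mulVec_mulVec, Matrix.mul_assoc]
end

section
/- Let M ∈ ℝ^{q×q} be invertible, let Y ∈ ℝ^{s×q}, let Q ∈ ℝ^{s×s} and V ∈ ℝ^{q×q} be symmetric positive definite, let b ∈ ℝ^q, and set P = Y M⁻¹. Define F₀ : ℝ^q → ℝ by F₀(g) = (1/2)(Y g)ᵀ Q (Y g) + (1/2)(M g − b)ᵀ V (M g − b), and G : ℝ^q → ℝ by G(v) = (1/2)(P(b+v))ᵀ Q (P(b+v)) + (1/2) vᵀ V v. Then F₀ has a unique minimizer g* over ℝ^q, G has a unique minimizer v* over ℝ^q, and they are related by v* = M g* − b; i.e., the unconstrained DeePC problem with λ_g = 0 and the unconstrained SPC problem yield the same optimal slack/input vector. -/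
open Matrix

/-- The unconstrained DeePC objective with regularization weight `λ_g = 0`:
`F₀(g) = (1/2)(Y g)ᵀ Q (Y g) + (1/2)(M g − b)ᵀ V (M g − b)`. -/
noncomputable def deepcObj0 {q s : ℕ} (M : Matrix (Fin q) (Fin q) ℝ)
    (Y : Matrix (Fin s) (Fin q) ℝ) (Q : Matrix (Fin s) (Fin s) ℝ)
    (V : Matrix (Fin q) (Fin q) ℝ) (b : Fin q → ℝ) (g : Fin q → ℝ) : ℝ :=
  (1 / 2) * (Y.mulVec g ⬝ᵥ Q.mulVec (Y.mulVec g)) +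
    (1 / 2) * ((M.mulVec g - b) ⬝ᵥ V.mulVec (M.mulVec g - b))

/-- The unconstrained SPC objective `G(v) = (1/2)(P(b+v))ᵀ Q (P(b+v)) + (1/2) vᵀ V v`. -/
noncomputable def spcObj {q s : ℕ} (P : Matrix (Fin s) (Fin q) ℝ)
    (V : Matrix (Fin q) (Fin q) ℝ) (Q : Matrix (Fin s) (Fin s) ℝ)
    (b : Fin q → ℝ) (v : Fin q → ℝ) : ℝ :=
  (1 / 2) * (P.mulVec (b + v) ⬝ᵥ Q.mulVec (P.mulVec (b + v))) + (1 / 2) * (v ⬝ᵥ V.mulVec v)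

/-! `F₀` is a quadratic with Hessian `A = YᵀQY + MᵀVM`, which is positive definite because `V` is
and `M` is invertible; so `F₀` has the unique minimizer `g* = A⁻¹MᵀVb`, where its gradient
vanishes. The SPC objective is `F₀` read in the coordinates `v = M g − b`, an affine bijection
of `ℝ^q` (`G(v) = F₀(M⁻¹(b + v))` since `Y M⁻¹ (b + v) = P (b + v)`), so its unique minimizer is
`M g* − b`. -/

def HasUniqueMinimizer {α β : Type*} [Preorder β] (f : α → β) (x : α) : Prop :=
  (∀ y, f x ≤ f y) ∧ ∀ y, (∀ y', f y ≤ f y') → y = x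

section UniqueMinimizer

variable {α β γ : Type*} [Preorder γ] {f : α → γ} {x : α}

theorem hasUniqueMinimizer_of_lt (h : ∀ y, y ≠ x → f x < f y) : HasUniqueMinimizer f x := by
  refine ⟨fun y ↦ ?_, fun y hy ↦ ?_⟩
  · rcases eq_or_ne y x with rfl | hyx
    · exact le_rfl
    · exact (h y hyx).le
  · by_contra hyx
    exact (h y hyx).not_ge (hy x)

theorem HasUniqueMinimizer.comp_equiv (hf : HasUniqueMinimizer f x) (e : β ≃ α) :
    HasUniqueMinimizer (f ∘ e) (e.symm x) := by
  refine ⟨fun y ↦ by simpa using hf.1 (e y), fun y hy ↦ ?_⟩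
  rw [← hf.2 (e y) fun y' ↦ by simpa using hy (e.symm y'), Equiv.symm_apply_apply]

end UniqueMinimizer

section Quadratic

variable {m n : Type*} [Fintype m] [Fintype n]

theorem Matrix.IsHermitian.dotProduct_mulVec_comm {A : Matrix n n ℝ} (hA : A.IsHermitian)
    (x y : n → ℝ) : x ⬝ᵥ A *ᵥ y = y ⬝ᵥ A *ᵥ x := by
  rw [dotProduct_mulVec, ← vecMul_transpose, ← conjTranspose_eq_transpose_of_trivial, hA,
    dotProduct_comm]

theorem dotProduct_mulVec_mulVec_eq_transpose_mul_mul {R : Type*} [CommSemiring R]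
    (B : Matrix m n R) (C : Matrix m m R) (x : n → R) :
    B *ᵥ x ⬝ᵥ C *ᵥ B *ᵥ x = x ⬝ᵥ (Bᵀ * C * B) *ᵥ x := by
  rw [← mulVec_mulVec, ← mulVec_mulVec, dotProduct_mulVec x, vecMul_transpose]

theorem quadratic_eq_add_of_mulVec_eq {A : Matrix n n ℝ} (hA : A.IsHermitian) {c x₀ : n → ℝ}
    (hx₀ : A *ᵥ x₀ = c) (x : n → ℝ) :
    1 / 2 * (x ⬝ᵥ A *ᵥ x) - c ⬝ᵥ x =
      (1 / 2 * (x₀ ⬝ᵥ A *ᵥ x₀) - c ⬝ᵥ x₀) + 1 / 2 * ((x - x₀) ⬝ᵥ A *ᵥ (x - x₀)) := by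
  have hcross : x₀ ⬝ᵥ A *ᵥ x = c ⬝ᵥ x := by
    rw [hA.dotProduct_mulVec_comm, hx₀, dotProduct_comm]
  rw [mulVec_sub, dotProduct_sub, sub_dotProduct, sub_dotProduct, hcross, hx₀,
    dotProduct_comm x c, dotProduct_comm x₀ c]
  ring

theorem quadratic_lt_of_mulVec_eq {A : Matrix n n ℝ} (hA : A.PosDef) {c x₀ : n → ℝ}
    (hx₀ : A *ᵥ x₀ = c) {x : n → ℝ} (hx : x ≠ x₀) :
    1 / 2 * (x₀ ⬝ᵥ A *ᵥ x₀) - c ⬝ᵥ x₀ < 1 / 2 * (x ⬝ᵥ A *ᵥ x) - c ⬝ᵥ x := by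
  have hpos : 0 < (x - x₀) ⬝ᵥ A *ᵥ (x - x₀) := hA.dotProduct_mulVec_pos (sub_ne_zero.2 hx)
  rw [quadratic_eq_add_of_mulVec_eq hA.isHermitian hx₀ x]
  linarith

theorem posDef_transpose_mul_mul_add [DecidableEq n] {Y : Matrix m n ℝ} {Q : Matrix m m ℝ}
    {M V : Matrix n n ℝ} (hQ : Q.PosSemidef) (hV : V.PosDef) (hM : IsUnit M.det) :
    (Yᵀ * Q * Y + Mᵀ * V * M).PosDef := by
  have hYQY : (Yᵀ * Q * Y).PosSemidef := hQ.conjTranspose_mul_mul_same Y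
  have hMVM : (Mᵀ * V * M).PosDef :=
    hV.conjTranspose_mul_mul_same (mulVec_injective_iff_isUnit.2 ((isUnit_iff_isUnit_det M).2 hM))
  exact PosDef.posSemidef_add hYQY hMVM

end Quadratic

noncomputable def slackEquiv {R n : Type*} [CommRing R] [Fintype n] [DecidableEq n]
    {M : Matrix n n R} (hM : IsUnit M.det) (b : n → R) : (n → R) ≃ (n → R) where
  toFun v := M⁻¹ *ᵥ (b + v)
  invFun g := M *ᵥ g - b
  left_inv v := by simp [mulVec_mulVec, mul_nonsing_inv _ hM]
  right_inv g := by simp [mulVec_mulVec, nonsing_inv_mul _ hM]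

section DeePC

variable {q s : ℕ}

theorem deepcObj0_eq (M : Matrix (Fin q) (Fin q) ℝ) (Y : Matrix (Fin s) (Fin q) ℝ)
    (Q : Matrix (Fin s) (Fin s) ℝ) {V : Matrix (Fin q) (Fin q) ℝ} (hV : V.IsHermitian)
    (b g : Fin q → ℝ) :
    deepcObj0 M Y Q V b g =
      (1 / 2 * (g ⬝ᵥ (Yᵀ * Q * Y + Mᵀ * V * M) *ᵥ g) - Mᵀ *ᵥ V *ᵥ b ⬝ᵥ g) +
        1 / 2 * (b ⬝ᵥ V *ᵥ b) := by
  have hcross : Mᵀ *ᵥ V *ᵥ b ⬝ᵥ g = b ⬝ᵥ V *ᵥ M *ᵥ g := by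
    rw [mulVec_transpose, ← dotProduct_mulVec, dotProduct_comm, hV.dotProduct_mulVec_comm]
  rw [deepcObj0, add_mulVec, dotProduct_add, ← dotProduct_mulVec_mulVec_eq_transpose_mul_mul,
    ← dotProduct_mulVec_mulVec_eq_transpose_mul_mul, mulVec_sub, dotProduct_sub, sub_dotProduct,
    sub_dotProduct, hV.dotProduct_mulVec_comm (M *ᵥ g) b, hcross]
  ring

theorem deepcObj0_hasUniqueMinimizer {M : Matrix (Fin q) (Fin q) ℝ} (hM : IsUnit M.det)
    (Y : Matrix (Fin s) (Fin q) ℝ) {Q : Matrix (Fin s) (Fin s) ℝ} {V : Matrix (Fin q) (Fin q) ℝ}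
    (hQ : Q.PosDef) (hV : V.PosDef) (b : Fin q → ℝ) :
    HasUniqueMinimizer (deepcObj0 M Y Q V b)
      ((Yᵀ * Q * Y + Mᵀ * V * M)⁻¹ *ᵥ Mᵀ *ᵥ V *ᵥ b) := by
  have hA := posDef_transpose_mul_mul_add (Y := Y) hQ.posSemidef hV hM
  have hcrit : (Yᵀ * Q * Y + Mᵀ * V * M) *ᵥ (Yᵀ * Q * Y + Mᵀ * V * M)⁻¹ *ᵥ Mᵀ *ᵥ V *ᵥ b =
      Mᵀ *ᵥ V *ᵥ b := by
    rw [mulVec_mulVec, mul_nonsing_inv _ ((isUnit_iff_isUnit_det _).1 hA.isUnit), one_mulVec]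
  refine hasUniqueMinimizer_of_lt fun g hg ↦ ?_
  rw [deepcObj0_eq M Y Q hV.isHermitian, deepcObj0_eq M Y Q hV.isHermitian]
  linarith [quadratic_lt_of_mulVec_eq hA hcrit hg]

theorem spcObj_eq_deepcObj0_comp {M : Matrix (Fin q) (Fin q) ℝ} (hM : IsUnit M.det)
    (Y : Matrix (Fin s) (Fin q) ℝ) (Q : Matrix (Fin s) (Fin s) ℝ) (V : Matrix (Fin q) (Fin q) ℝ)
    (b : Fin q → ℝ) :
    spcObj (Y * M⁻¹) V Q b = deepcObj0 M Y Q V b ∘ slackEquiv hM b := by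
  funext v
  have hMv : M *ᵥ M⁻¹ *ᵥ (b + v) = b + v := by
    rw [mulVec_mulVec, mul_nonsing_inv _ hM, one_mulVec]
  simp only [spcObj, deepcObj0, Function.comp_apply, slackEquiv, Equiv.coe_fn_mk, hMv,
    mulVec_mulVec, add_sub_cancel_left]

end DeePC

/-- **Theorem 2 (equivalence of unconstrained DeePC with `λ_g = 0` and SPC).** For invertible
`M` and `P = Y M⁻¹`, the objectives `F₀` and `G` have unique minimizers `g*` and `v*`
respectively, and they are related by `v* = M g* − b`. -/
theorem deepc_spc_nondeterministic_equivalence {q s : ℕ}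
    (M : Matrix (Fin q) (Fin q) ℝ) (hM : IsUnit M.det)
    (Y : Matrix (Fin s) (Fin q) ℝ)
    (Q : Matrix (Fin s) (Fin s) ℝ) (V : Matrix (Fin q) (Fin q) ℝ)
    (hQ : Q.PosDef) (hV : V.PosDef) (b : Fin q → ℝ)
    (P : Matrix (Fin s) (Fin q) ℝ) (hP : P = Y * M⁻¹) :
    ∃ (gs vs : Fin q → ℝ),
      (∀ g : Fin q → ℝ, deepcObj0 M Y Q V b gs ≤ deepcObj0 M Y Q V b g) ∧
      (∀ g : Fin q → ℝ, (∀ g' : Fin q → ℝ, deepcObj0 M Y Q V b g ≤ deepcObj0 M Y Q V b g') →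
        g = gs) ∧
      (∀ v : Fin q → ℝ, spcObj P V Q b vs ≤ spcObj P V Q b v) ∧
      (∀ v : Fin q → ℝ, (∀ v' : Fin q → ℝ, spcObj P V Q b v ≤ spcObj P V Q b v') → v = vs) ∧
      vs = M.mulVec gs - b := by
  subst hP
  have hdeepc := deepcObj0_hasUniqueMinimizer hM Y hQ hV b
  have hspc := hdeepc.comp_equiv (slackEquiv hM b)
  rw [← spcObj_eq_deepcObj0_comp] at hspc
  exact ⟨_, _, hdeepc.1, hdeepc.2, hspc.1, hspc.2, rfl⟩
end
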